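/- arXiv:2512.09968 — 8 statements merged into one kernel-verified Lean document; each statement's English description precedes it below -/
import Mathlib

section
/- Let (a_n) be a sequence of nonnegative reals such that the series Σ_{n=0}^∞ a_n diverges with rate of divergence θ, and let N ∈ ℕ, N ≥ 1. Then the series Σ_{n=0}^∞ a_{n+N} diverges with rate of divergence θ*(n) = θ(n + ⌈Σ_{i=0}^{N-1} a_i⌉) ∸ N (truncated subtraction). Moreover, if a_n ∈ [0,1] for all n, then one can take θ*(n) = θ⁺(n+N) ∸ N, where θ⁺(n) = max{θ(i) : 0 ≤ i ≤ n}. -/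
/-!
Cutting off the first `N` terms lowers every partial sum by `∑_{i<N} a_i`, so a rate for the
original series evaluated `c ≥ ∑_{i<N} a_i` steps later, and moved `N` indices back, is a rate
for the tail. For the second rate one takes `c = N`, which bounds `∑_{i<N} a_i` when all
`a_i ≤ 1`, and replaces `θ` by its running maximum, which is again a rate.
-/

open Finset

def IsRateOfDivergence (a : ℕ → ℝ) (θ : ℕ → ℕ) : Prop :=
  ∀ n : ℕ, (n : ℝ) ≤ ∑ i ∈ range (θ n + 1), a i

section

variable {a : ℕ → ℝ}

theorem sum_range_mono_of_nonneg (ha : ∀ n, 0 ≤ a n) {p q : ℕ} (hpq : p ≤ q) :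
    ∑ i ∈ range p, a i ≤ ∑ i ∈ range q, a i :=
  sum_le_sum_of_subset_of_nonneg (range_subset_range.2 hpq) fun i _ _ => ha i

theorem sum_range_le_add_sum_range_shift (ha : ∀ n, 0 ≤ a n) (M N : ℕ) :
    ∑ i ∈ range M, a i ≤ ∑ i ∈ range N, a i + ∑ i ∈ range (M - N), a (i + N) := by
  calc ∑ i ∈ range M, a i
      ≤ ∑ i ∈ range (N + (M - N)), a i := sum_range_mono_of_nonneg ha (by omega)
    _ = ∑ i ∈ range N, a i + ∑ i ∈ range (M - N), a (i + N) := by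
      rw [sum_range_add]
      simp_rw [add_comm N]

theorem sum_range_le_of_le_one {N : ℕ} (h : ∀ n, a n ≤ 1) : ∑ i ∈ range N, a i ≤ N := by
  simpa using sum_le_card_nsmul (range N) a 1 fun i _ => h i

namespace IsRateOfDivergence

variable {θ : ℕ → ℕ}

theorem mono (ha : ∀ n, 0 ≤ a n) (hθ : IsRateOfDivergence a θ) {θ' : ℕ → ℕ}
    (hθθ' : ∀ n, θ n ≤ θ' n) : IsRateOfDivergence a θ' := fun n =>
  (hθ n).trans (sum_range_mono_of_nonneg ha (by simpa using hθθ' n))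

theorem sup_range (ha : ∀ n, 0 ≤ a n) (hθ : IsRateOfDivergence a θ) :
    IsRateOfDivergence a fun n => (range (n + 1)).sup θ :=
  hθ.mono ha fun n => le_sup (self_mem_range_succ n)

theorem shift (ha : ∀ n, 0 ≤ a n) (hθ : IsRateOfDivergence a θ) {N c : ℕ}
    (hc : ∑ i ∈ range N, a i ≤ c) :
    IsRateOfDivergence (fun i => a (i + N)) fun n => θ (n + c) - N := by
  intro n
  have hsplit := sum_range_le_add_sum_range_shift ha (θ (n + c) + 1) N
  have htail : ∑ i ∈ range (θ (n + c) + 1 - N), a (i + N)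
      ≤ ∑ i ∈ range (θ (n + c) - N + 1), a (i + N) :=
    sum_range_mono_of_nonneg (fun i => ha (i + N)) (by omega)
  have hrate := hθ (n + c)
  push_cast at hrate
  linarith

end IsRateOfDivergence

end

theorem rate_of_divergence_shift_general (a : ℕ → ℝ) (ha : ∀ n, 0 ≤ a n) (θ : ℕ → ℕ)
    (hθ : ∀ n : ℕ, (n : ℝ) ≤ ∑ i ∈ Finset.range (θ n + 1), a i)
    (N : ℕ) :
    (∀ n : ℕ, (n : ℝ) ≤
      ∑ i ∈ Finset.range ((θ (n + ⌈∑ i ∈ Finset.range N, a i⌉₊) - N) + 1), a (i + N)) ∧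
    ((∀ n, a n ≤ 1) → ∀ n : ℕ, (n : ℝ) ≤
      ∑ i ∈ Finset.range (((Finset.range (n + N + 1)).sup θ - N) + 1), a (i + N)) := by
  have hrate : IsRateOfDivergence a θ := hθ
  exact ⟨hrate.shift ha (Nat.le_ceil _),
    fun hle => (hrate.sup_range ha).shift ha (sum_range_le_of_le_one hle)⟩

/-- If `∑ a_n` diverges with rate of divergence `θ` and `N ≥ 1`, then `∑ a_{n+N}` diverges
with rate of divergence `θ*(n) = θ(n + ⌈∑_{i<N} a_i⌉) ∸ N`; moreover, if `a_n ∈ [0,1]` for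
all `n`, one can take `θ*(n) = θ⁺(n+N) ∸ N` where `θ⁺(n) = max_{i ≤ n} θ(i)`. -/
theorem rate_of_divergence_shift (a : ℕ → ℝ) (ha : ∀ n, 0 ≤ a n) (θ : ℕ → ℕ)
    (hθ : ∀ n : ℕ, (n : ℝ) ≤ ∑ i ∈ Finset.range (θ n + 1), a i)
    (N : ℕ) (hN : 1 ≤ N) :
    (∀ n : ℕ, (n : ℝ) ≤
      ∑ i ∈ Finset.range ((θ (n + ⌈∑ i ∈ Finset.range N, a i⌉₊) - N) + 1), a (i + N)) ∧
    ((∀ n, a n ≤ 1) → ∀ n : ℕ, (n : ℝ) ≤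
      ∑ i ∈ Finset.range (((Finset.range (n + N + 1)).sup θ - N) + 1), a (i + N)) :=
  rate_of_divergence_shift_general a ha θ hθ N
end

section
/- Let L > 0, let J and N be real numbers with J ≥ N ≥ 2, let γ ∈ (0,1], and set a_n = N/(γ(n+J)) for all n ∈ ℕ. Let (c_n) be a sequence of reals bounded above by L and (s_n) a sequence of nonnegative reals with s_0 ≤ L such that s_{n+1} ≤ (1 - γ·a_{n+1})·s_n + (a_n - a_{n+1})·c_n for all n ∈ ℕ. Then s_n ≤ J·L/(γ(n+J)) for all n ∈ ℕ. -/
/-!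
The bound `b n = J L / (γ (n + J))` is a supersolution of the recursion with `c n` replaced by
its upper bound `L`: writing `x = n + J`, one step of the recursion applied to `b n` overshoots
`b (n + 1)` by exactly `L (J + N - J N) / (γ x (x + 1))`, which is `≤ 0` because
`(J - 1)(N - 1) ≥ 1`. Since the coefficient `1 - γ a (n + 1) = 1 - N / (n + 1 + J)` is nonnegative,
the recursion is monotone, so `s n ≤ b n` propagates by induction from `s 0 ≤ L ≤ L / γ = b 0`.
-/

theorem le_of_affine_recursion_le {s b α β : ℕ → ℝ} (hα : ∀ n, 0 ≤ α n)
    (hs : ∀ n, s (n + 1) ≤ α n * s n + β n) (hb : ∀ n, α n * b n + β n ≤ b (n + 1))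
    (h0 : s 0 ≤ b 0) : ∀ n, s n ≤ b n
  | 0 => h0
  | n + 1 => calc
      s (n + 1) ≤ α n * s n + β n := hs n
      _ ≤ α n * b n + β n := by
        gcongr
        · exact hα n
        · exact le_of_affine_recursion_le hα hs hb h0 n
      _ ≤ b (n + 1) := hb n

section SabachShtern

variable {L J N γ x : ℝ}

lemma sabach_shtern_step_eq (hγ : γ ≠ 0) (hx : 0 < x) :
    (1 - γ * (N / (γ * (x + 1)))) * (J * L / (γ * x)) + (N / (γ * x) - N / (γ * (x + 1))) * L
      = J * L / (γ * (x + 1)) + L * (J + N - J * N) / (γ * x * (x + 1)) := by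
  field_simp
  ring

lemma sabach_shtern_step_le (hL : 0 ≤ L) (hN : 2 ≤ N) (hJN : N ≤ J)
    (hγ : 0 < γ) (hx : 0 < x) :
    (1 - γ * (N / (γ * (x + 1)))) * (J * L / (γ * x)) + (N / (γ * x) - N / (γ * (x + 1))) * L
      ≤ J * L / (γ * (x + 1)) := by
  rw [sabach_shtern_step_eq hγ.ne' hx, add_le_iff_nonpos_right]
  have hJN' : J + N - J * N ≤ 0 := by nlinarith
  exact div_nonpos_of_nonpos_of_nonneg (mul_nonpos_of_nonneg_of_nonpos hL hJN') (by positivity)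

end SabachShtern

theorem sabach_shtern_general (L J N γ : ℝ) (hL : 0 < L) (hJN : N ≤ J) (hN : 2 ≤ N)
    (hγ0 : 0 < γ) (hγ1 : γ ≤ 1)
    (a c s : ℕ → ℝ)
    (ha : ∀ n : ℕ, a n = N / (γ * ((n : ℝ) + J)))
    (hc : ∀ n, c n ≤ L)
    (hs0 : s 0 ≤ L)
    (hrec : ∀ n : ℕ, s (n + 1) ≤ (1 - γ * a (n + 1)) * s n + (a n - a (n + 1)) * c n) :
    ∀ n : ℕ, s n ≤ J * L / (γ * ((n : ℝ) + J)) := by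
  have hJ : 0 < J := by linarith
  have hx (n : ℕ) : 0 < (n : ℝ) + J := by positivity
  have ha_succ (n : ℕ) : a (n + 1) = N / (γ * ((n + J : ℝ) + 1)) := by
    rw [ha]; push_cast; ring_nf
  refine le_of_affine_recursion_le (fun n => ?_) hrec (fun n => ?_) ?_
  · rw [ha_succ, mul_div_assoc', mul_div_mul_left _ _ hγ0.ne', sub_nonneg]
    exact div_le_one_of_le₀ (by linarith) (by linarith [hx n])
  · have ha_anti : a (n + 1) ≤ a n := by
      rw [ha_succ, ha]
      exact div_le_div_of_nonneg_left (by linarith) (by positivity) (by linarith)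
    calc _ ≤ (1 - γ * a (n + 1)) * (J * L / (γ * (n + J))) + (a n - a (n + 1)) * L :=
          add_le_add_right (mul_le_mul_of_nonneg_left (hc n) (sub_nonneg.mpr ha_anti)) _
      _ ≤ J * L / (γ * ((n + J : ℝ) + 1)) := by
          rw [ha_succ, ha]
          exact sabach_shtern_step_le hL.le hN hJN hγ0 (hx n)
      _ = J * L / (γ * (((n + 1 : ℕ) : ℝ) + J)) := by push_cast; ring_nf
  · calc s 0 ≤ L := hs0
      _ ≤ L / γ := le_div_self hL.le hγ0 hγ1
      _ = J * L / (γ * ((0 : ℕ) + J)) := by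
        rw [Nat.cast_zero, zero_add, mul_comm γ, mul_div_mul_left _ _ hJ.ne']

/-- Sabach–Shtern lemma: if `a_n = N/(γ(n+J))` with `J ≥ N ≥ 2`, `γ ∈ (0,1]`, `(c_n)` is
bounded above by `L > 0`, `(s_n)` is nonnegative with `s_0 ≤ L` and
`s_{n+1} ≤ (1 - γ a_{n+1}) s_n + (a_n - a_{n+1}) c_n`, then `s_n ≤ J L/(γ(n+J))`. -/
theorem sabach_shtern (L J N γ : ℝ) (hL : 0 < L) (hJN : N ≤ J) (hN : 2 ≤ N)
    (hγ0 : 0 < γ) (hγ1 : γ ≤ 1)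
    (a c s : ℕ → ℝ)
    (ha : ∀ n : ℕ, a n = N / (γ * ((n : ℝ) + J)))
    (hc : ∀ n, c n ≤ L)
    (hs : ∀ n, 0 ≤ s n) (hs0 : s 0 ≤ L)
    (hrec : ∀ n : ℕ, s (n + 1) ≤ (1 - γ * a (n + 1)) * s n + (a n - a (n + 1)) * c n) :
    ∀ n : ℕ, s n ≤ J * L / (γ * ((n : ℝ) + J)) :=
  sabach_shtern_general L J N γ hL hJN hN hγ0 hγ1 a c s ha hc hs0 hrec
end

section
/- Let (x_n), (y_n) be sequences in a metric space (X,d) such that (x_n) is Cauchy with rate of metastability Ω and d(x_n, y_n) → 0 with rate of convergence φ. Then (y_n) is Cauchy with rate of metastability Γ(k,g) = max{φ(3k+2), Ω(3k+2, h_{k,g})}, where h_{k,g}(m) = max{φ(3k+2), m} - m + g(max{φ(3k+2), m}). -/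
/-!
Split `1/(k+1)` into three thirds `1/(3k+3)`. Past `φ(3k+2)` every `y n` is within a third of
`x n`, and the counterfunction `h_{k,g}` is chosen so that the window `[M, M + g M]` with
`M = max (φ(3k+2)) N` lies inside `[N, N + h N]`, where the metastability of `x` gives a third;
the triangle inequality adds up the three. The Cauchy property of `y` then follows from its
metastability.
-/

section

variable {X : Type*} [PseudoMetricSpace X]

def IsMetastabilityRate (x : ℕ → X) (Ω : ℕ → (ℕ → ℕ) → ℕ) : Prop :=
  ∀ (k : ℕ) (g : ℕ → ℕ), ∃ N ≤ Ω k g, ∀ i j : ℕ,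
    N ≤ i → i ≤ N + g N → N ≤ j → j ≤ N + g N → dist (x i) (x j) ≤ 1 / ((k : ℝ) + 1)

def IsDistConvergenceRate (x y : ℕ → X) (φ : ℕ → ℕ) : Prop :=
  ∀ k n : ℕ, φ k ≤ n → dist (x n) (y n) ≤ 1 / ((k : ℝ) + 1)

theorem IsMetastabilityRate.cauchySeq {x : ℕ → X} {Ω : ℕ → (ℕ → ℕ) → ℕ}
    (hΩ : IsMetastabilityRate x Ω) : CauchySeq x := by
  rw [Metric.cauchySeq_iff']
  by_contra! hx
  obtain ⟨ε, hε, hfar⟩ := hx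
  choose i hi hdist using hfar
  obtain ⟨k, hk⟩ := exists_nat_one_div_lt hε
  -- `g N` is chosen so that the window `[N, N + g N]` contains the bad index `i N`.
  obtain ⟨N, -, hN⟩ := hΩ k (fun N => i N)
  have hclose := hN (i N) N (hi N) le_add_self le_rfl le_self_add
  linarith [hdist N]

theorem dist_le_three_mul_of_dist_le {a b c d : X} {ε : ℝ}
    (hab : dist a b ≤ ε) (hac : dist a c ≤ ε) (hcd : dist c d ≤ ε) : dist b d ≤ 3 * ε := by
  have := dist_triangle4 b a c d
  rw [dist_comm b a] at this
  linarith

theorem three_mul_one_div_cast_three_mul_add_two_add_one (k : ℕ) :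
    3 * (1 / (((3 * k + 2 : ℕ) : ℝ) + 1)) = 1 / ((k : ℝ) + 1) := by
  push_cast
  field_simp
  ring

/-- This is where `h_{k,g}` comes from: with `c = φ(3k+2)`, the window of `y` starting at
`max c N` ends exactly where the window of `x` starting at `N` under `h_{k,g}` ends. -/
theorem max_add_apply_max_eq_add (c N : ℕ) (g : ℕ → ℕ) :
    max c N + g (max c N) = N + (max c N - N + g (max c N)) := by
  omega

theorem IsMetastabilityRate.of_isDistConvergenceRate {x y : ℕ → X}
    {Ω : ℕ → (ℕ → ℕ) → ℕ} {φ : ℕ → ℕ}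
    (hΩ : IsMetastabilityRate x Ω) (hφ : IsDistConvergenceRate x y φ) :
    IsMetastabilityRate y fun k g =>
      max (φ (3 * k + 2))
        (Ω (3 * k + 2) (fun m => max (φ (3 * k + 2)) m - m + g (max (φ (3 * k + 2)) m))) := by
  intro k g
  set K := 3 * k + 2
  obtain ⟨N, hNΩ, hN⟩ := hΩ K (fun m => max (φ K) m - m + g (max (φ K) m))
  refine ⟨max (φ K) N, max_le_max le_rfl hNΩ, fun i j hi hi' hj hj' => ?_⟩
  have hwindow := max_add_apply_max_eq_add (φ K) N g
  have hxy_i := hφ K i (le_of_max_le_left hi)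
  have hxy_j := hφ K j (le_of_max_le_left hj)
  have hx_ij := hN i j (le_of_max_le_right hi) (hwindow ▸ hi') (le_of_max_le_right hj)
    (hwindow ▸ hj')
  rw [← three_mul_one_div_cast_three_mul_add_two_add_one k]
  exact dist_le_three_mul_of_dist_le hxy_i hx_ij hxy_j

end

theorem rate_of_metastability_transfer_general {X : Type*} [MetricSpace X] (x y : ℕ → X)
    (Ω : ℕ → (ℕ → ℕ) → ℕ)
    (hΩ : ∀ (k : ℕ) (g : ℕ → ℕ), ∃ N ≤ Ω k g, ∀ i j : ℕ,
      N ≤ i → i ≤ N + g N → N ≤ j → j ≤ N + g N → dist (x i) (x j) ≤ 1 / ((k : ℝ) + 1))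
    (φ : ℕ → ℕ)
    (hφ : ∀ k n : ℕ, φ k ≤ n → dist (x n) (y n) ≤ 1 / ((k : ℝ) + 1)) :
    CauchySeq y ∧
    ∀ (k : ℕ) (g : ℕ → ℕ),
      ∃ N ≤ max (φ (3 * k + 2))
          (Ω (3 * k + 2) (fun m => max (φ (3 * k + 2)) m - m + g (max (φ (3 * k + 2)) m))),
        ∀ i j : ℕ, N ≤ i → i ≤ N + g N → N ≤ j → j ≤ N + g N →
          dist (y i) (y j) ≤ 1 / ((k : ℝ) + 1) := by
  have hΓ : IsMetastabilityRate y _ := IsMetastabilityRate.of_isDistConvergenceRate hΩ hφ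
  exact ⟨hΓ.cauchySeq, hΓ⟩

/-- If `(x_n)` is Cauchy with rate of metastability `Ω` and `d(x_n, y_n) → 0` with rate of
convergence `φ`, then `(y_n)` is Cauchy with rate of metastability
`Γ(k,g) = max {φ(3k+2), Ω(3k+2, h_{k,g})}` where
`h_{k,g}(m) = max {φ(3k+2), m} - m + g(max {φ(3k+2), m})`. -/
theorem rate_of_metastability_transfer {X : Type*} [MetricSpace X] (x y : ℕ → X)
    (hxCauchy : CauchySeq x)
    (Ω : ℕ → (ℕ → ℕ) → ℕ)
    (hΩ : ∀ (k : ℕ) (g : ℕ → ℕ), ∃ N ≤ Ω k g, ∀ i j : ℕ,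
      N ≤ i → i ≤ N + g N → N ≤ j → j ≤ N + g N → dist (x i) (x j) ≤ 1 / ((k : ℝ) + 1))
    (φ : ℕ → ℕ)
    (hφ : ∀ k n : ℕ, φ k ≤ n → dist (x n) (y n) ≤ 1 / ((k : ℝ) + 1)) :
    CauchySeq y ∧
    ∀ (k : ℕ) (g : ℕ → ℕ),
      ∃ N ≤ max (φ (3 * k + 2))
          (Ω (3 * k + 2) (fun m => max (φ (3 * k + 2)) m - m + g (max (φ (3 * k + 2)) m))),
        ∀ i j : ℕ, N ≤ i → i ≤ N + g N → N ≤ j → j ≤ N + g N →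
          dist (y i) (y j) ≤ 1 / ((k : ℝ) + 1) :=
  rate_of_metastability_transfer_general x y Ω hΩ φ hφ
end

section
/- In the genVAM setting in a real normed space, for all n ∈ ℕ one has ‖x_n - T_n x_n‖ ≤ ‖x_n - x_{n+1}‖ + 2K_z·α_n. -/
/-!
The set `C ∩ closedBall z K` is convex and, because `‖f z - z‖ ≤ (1 - α) K`, invariant under `f`
and under every `T n`; hence it contains all iterates. Then
`x (n+1) - T n (x n) = a n • (f (x n) - T n (x n))`, and both `f (x n)` and `T n (x n)` lie within
`K` of `z`.
-/

open Set Metric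

section

variable {X : Type*} [NormedAddCommGroup X]

/-- Taking `α = 1` covers nonexpansive maps fixing `z`. -/
lemma mapsTo_inter_closedBall_of_lipschitz_at {C : Set X} {f : X → X} {z : X} {α r : ℝ}
    (hα : 0 ≤ α) (hfC : MapsTo f C C) (hf : ∀ x ∈ C, ‖f x - f z‖ ≤ α * ‖x - z‖)
    (hfz : ‖f z - z‖ ≤ (1 - α) * r) :
    MapsTo f (C ∩ closedBall z r) (C ∩ closedBall z r) := by
  rintro x ⟨hxC, hxz⟩
  rw [mem_closedBall_iff_norm] at hxz
  refine ⟨hfC hxC, mem_closedBall_iff_norm.2 ?_⟩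
  calc ‖f x - z‖ ≤ ‖f x - f z‖ + ‖f z - z‖ := norm_sub_le_norm_sub_add_norm_sub _ _ _
    _ ≤ α * r + (1 - α) * r := add_le_add ((hf x hxC).trans (by gcongr)) hfz
    _ = r := by ring

variable [NormedSpace ℝ X]

lemma Convex.iterate_mem_of_mapsTo {S : Set X} (hS : Convex ℝ S) {f : X → X} {T : ℕ → X → X}
    (hf : MapsTo f S S) (hT : ∀ n, MapsTo (T n) S S) {a : ℕ → ℝ} (ha : ∀ n, a n ∈ Icc (0 : ℝ) 1)
    {x : ℕ → X} (hx0 : x 0 ∈ S) (hx : ∀ n, x (n + 1) = a n • f (x n) + (1 - a n) • T n (x n)) :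
    ∀ n, x n ∈ S
  | 0 => hx0
  | n + 1 => by
    have hxn := hS.iterate_mem_of_mapsTo hf hT ha hx0 hx n
    rw [hx n]
    exact hS (hf hxn) (hT n hxn) (ha n).1 (sub_nonneg.2 (ha n).2) (add_sub_cancel _ _)

lemma norm_sub_le_norm_sub_convexComb_add (u v w : X) {t : ℝ} (ht : 0 ≤ t) :
    ‖w - v‖ ≤ ‖w - (t • u + (1 - t) • v)‖ + t * ‖u - v‖ := by
  have hcomb : t • u + (1 - t) • v - v = t • (u - v) := by module
  calc ‖w - v‖ ≤ ‖w - (t • u + (1 - t) • v)‖ + ‖t • u + (1 - t) • v - v‖ :=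
        norm_sub_le_norm_sub_add_norm_sub _ _ _
    _ = ‖w - (t • u + (1 - t) • v)‖ + t * ‖u - v‖ := by
        rw [hcomb, norm_smul, Real.norm_of_nonneg ht]

end

theorem genVAM_dist_to_Tn_general {X : Type*} [NormedAddCommGroup X] [NormedSpace ℝ X]
    (C : Set X) (hC : Convex ℝ C)
    (f : X → X) (α : ℝ) (hα0 : 0 ≤ α) (hα1 : α < 1)
    (hfC : ∀ x ∈ C, f x ∈ C)
    (hf : ∀ x ∈ C, ∀ y ∈ C, ‖f x - f y‖ ≤ α * ‖x - y‖)
    (T : ℕ → X → X) (hTC : ∀ n, ∀ x ∈ C, T n x ∈ C)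
    (hT : ∀ n, ∀ x ∈ C, ∀ y ∈ C, ‖T n x - T n y‖ ≤ ‖x - y‖)
    (z : X) (hz : z ∈ C) (hzfix : ∀ n, T n z = z)
    (a : ℕ → ℝ) (ha : ∀ n, a n ∈ Set.Icc (0 : ℝ) 1)
    (x : ℕ → X) (hx0 : x 0 ∈ C)
    (hx : ∀ n, x (n + 1) = a n • f (x n) + (1 - a n) • T n (x n))
    (K : ℕ)
    (hK1 : ‖x 0 - z‖ ≤ K) (hK2 : ‖f z - z‖ / (1 - α) ≤ K) :
    ∀ n : ℕ, ‖x n - T n (x n)‖ ≤ ‖x n - x (n + 1)‖ + 2 * K * a n := by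
  intro n
  have hfz : ‖f z - z‖ ≤ (1 - α) * K := by
    rwa [div_le_iff₀ (sub_pos.2 hα1), mul_comm] at hK2
  have hfS := mapsTo_inter_closedBall_of_lipschitz_at hα0 hfC (fun x hx ↦ hf x hx z hz) hfz
  have hTS n : MapsTo (T n) (C ∩ closedBall z K) (C ∩ closedBall z K) :=
    mapsTo_inter_closedBall_of_lipschitz_at zero_le_one (hTC n)
      (fun x hx ↦ by simpa using hT n x hx z hz) (by simp [hzfix n])
  obtain ⟨hxC, hxz⟩ := (hC.inter (convex_closedBall z K)).iterate_mem_of_mapsTo hfS hTS ha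
    ⟨hx0, mem_closedBall_iff_norm.2 hK1⟩ hx n
  have hfT : ‖f (x n) - T n (x n)‖ ≤ 2 * K := by
    have hfx := mem_closedBall_iff_norm.1 (hfS ⟨hxC, hxz⟩).2
    have hTx := mem_closedBall_iff_norm'.1 (hTS n ⟨hxC, hxz⟩).2
    linarith [norm_sub_le_norm_sub_add_norm_sub (f (x n)) z (T n (x n))]
  calc ‖x n - T n (x n)‖ ≤ ‖x n - x (n + 1)‖ + a n * ‖f (x n) - T n (x n)‖ :=
        hx n ▸ norm_sub_le_norm_sub_convexComb_add _ _ _ (ha n).1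
    _ ≤ ‖x n - x (n + 1)‖ + 2 * K * a n := by nlinarith [(ha n).1]

/-- In the genVAM setting, `‖x_n - T_n x_n‖ ≤ ‖x_n - x_{n+1}‖ + 2 K_z α_n` for all `n`. -/
theorem genVAM_dist_to_Tn {X : Type*} [NormedAddCommGroup X] [NormedSpace ℝ X]
    (C : Set X) (hCne : C.Nonempty) (hC : Convex ℝ C)
    (f : X → X) (α : ℝ) (hα0 : 0 ≤ α) (hα1 : α < 1)
    (hfC : ∀ x ∈ C, f x ∈ C)
    (hf : ∀ x ∈ C, ∀ y ∈ C, ‖f x - f y‖ ≤ α * ‖x - y‖)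
    (T : ℕ → X → X) (hTC : ∀ n, ∀ x ∈ C, T n x ∈ C)
    (hT : ∀ n, ∀ x ∈ C, ∀ y ∈ C, ‖T n x - T n y‖ ≤ ‖x - y‖)
    (z : X) (hz : z ∈ C) (hzfix : ∀ n, T n z = z)
    (a : ℕ → ℝ) (ha : ∀ n, a n ∈ Set.Icc (0 : ℝ) 1)
    (x : ℕ → X) (hx0 : x 0 ∈ C)
    (hx : ∀ n, x (n + 1) = a n • f (x n) + (1 - a n) • T n (x n))
    (K : ℕ) (hK : 1 ≤ K)
    (hK1 : ‖x 0 - z‖ ≤ K) (hK2 : ‖f z - z‖ / (1 - α) ≤ K) :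
    ∀ n : ℕ, ‖x n - T n (x n)‖ ≤ ‖x n - x (n + 1)‖ + 2 * K * a n :=
  genVAM_dist_to_Tn_general C hC f α hα0 hα1 hfC hf T hTC hT z hz hzfix a ha x hx0 hx K hK1 hK2
end

section
/- In the genVAM setting in a real normed space, let (λ_n) be a sequence in (0,∞), let n ∈ ℕ, and set β_n = 1 - (1-α)·α_{n+1}. If the family (T_n) satisfies Res((λ_n), n, n+1), i.e. ‖T_n y - T_{n+1} y‖ ≤ |1 - λ_{n+1}/λ_n|·‖y - T_n y‖ for all y ∈ C, then ‖x_{n+2} - x_{n+1}‖ ≤ β_n·‖x_{n+1} - x_n‖ + 2K_z·(|α_{n+1} - α_n| + (1 - α_{n+1})·|1 - λ_{n+1}/λ_n|). -/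
/-!
All iterates stay in `C ∩ closedBall z K`: this set is convex, and both `f` and every `T n` map
it into itself (for `f` because `‖f z - z‖ ≤ (1 - α) K`). Writing the difference of two
consecutive steps as
`α_{n+1} (f x_{n+1} - f x_n) + (α_{n+1} - α_n) (f x_n - T_n x_n) + (1 - α_{n+1}) (T_{n+1} x_{n+1} - T_n x_n)`,
the first term is controlled by the contraction, the last by nonexpansiveness of `T_{n+1}` plus
the resolvent-type condition, and the vectors `f x_n - T_n x_n`, `x_n - T_n x_n` have norm at most
`2K` since their endpoints lie in the ball.
-/

open Set Metric

theorem Convex.viscosity_iterate_mem {X : Type*} [AddCommGroup X] [Module ℝ X] {S : Set X}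
    (hS : Convex ℝ S) {f : X → X} {T : ℕ → X → X} (hf : MapsTo f S S)
    (hT : ∀ n, MapsTo (T n) S S) {a : ℕ → ℝ} (ha : ∀ n, a n ∈ Icc (0 : ℝ) 1) {x : ℕ → X}
    (hx0 : x 0 ∈ S) (hx : ∀ n, x (n + 1) = a n • f (x n) + (1 - a n) • T n (x n)) :
    ∀ n, x n ∈ S
  | 0 => hx0
  | n + 1 => hx n ▸ hS (hf (hS.viscosity_iterate_mem hf hT ha hx0 hx n))
      (hT n (hS.viscosity_iterate_mem hf hT ha hx0 hx n)) (ha n).1 (sub_nonneg.2 (ha n).2)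
      (add_sub_cancel _ _)

section Normed

variable {X : Type*} [SeminormedAddCommGroup X]

theorem mapsTo_inter_closedBall_of_lipschitz {C : Set X} {f : X → X} {α K : ℝ} {z : X}
    (hα : 0 ≤ α) (hfC : MapsTo f C C) (hz : z ∈ C)
    (hf : ∀ x ∈ C, ∀ y ∈ C, ‖f x - f y‖ ≤ α * ‖x - y‖) (hfz : ‖f z - z‖ ≤ K * (1 - α)) :
    MapsTo f (C ∩ closedBall z K) (C ∩ closedBall z K) := by
  rintro u ⟨huC, hu⟩
  rw [mem_closedBall_iff_norm] at hu
  refine ⟨hfC huC, mem_closedBall_iff_norm.2 ?_⟩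
  calc ‖f u - z‖ ≤ ‖f u - f z‖ + ‖f z - z‖ := norm_sub_le_norm_sub_add_norm_sub _ _ _
    _ ≤ α * K + K * (1 - α) :=
      add_le_add ((hf u huC z hz).trans (mul_le_mul_of_nonneg_left hu hα)) hfz
    _ = K := by ring

theorem norm_sub_le_two_mul_of_mem_closedBall {p q z : X} {r : ℝ} (hp : p ∈ closedBall z r)
    (hq : q ∈ closedBall z r) : ‖p - q‖ ≤ 2 * r := by
  rw [← dist_eq_norm]
  linarith [dist_triangle_right p q z, mem_closedBall.1 hp, mem_closedBall.1 hq]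

variable [NormedSpace ℝ X]

theorem norm_viscosity_step_sub_le {f T T' : X → X} {α s t L R : ℝ} {u v w : X}
    (hv : v = s • f u + (1 - s) • T u) (hw : w = t • f v + (1 - t) • T' v)
    (ht : t ∈ Icc (0 : ℝ) 1) (hf : ‖f v - f u‖ ≤ α * ‖v - u‖) (hT' : ‖T' v - T' u‖ ≤ ‖v - u‖)
    (hRes : ‖T u - T' u‖ ≤ L * ‖u - T u‖) (hL : 0 ≤ L) (hfT : ‖f u - T u‖ ≤ R)
    (huT : ‖u - T u‖ ≤ R) :
    ‖w - v‖ ≤ (1 - (1 - α) * t) * ‖v - u‖ + R * (|t - s| + (1 - t) * L) := by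
  have h1t : 0 ≤ 1 - t := sub_nonneg.2 ht.2
  have hTT : ‖T' v - T u‖ ≤ ‖v - u‖ + L * R :=
    calc ‖T' v - T u‖ ≤ ‖T' v - T' u‖ + ‖T u - T' u‖ := by
          rw [norm_sub_rev (T u)]; exact norm_sub_le_norm_sub_add_norm_sub _ _ _
      _ ≤ ‖v - u‖ + L * R := add_le_add hT' (hRes.trans (mul_le_mul_of_nonneg_left huT hL))
  have hdiff : w - v = t • (f v - f u) + (t - s) • (f u - T u) + (1 - t) • (T' v - T u) :=
    calc w - v = (t • f v + (1 - t) • T' v) - (s • f u + (1 - s) • T u) := by rw [← hv, hw]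
      _ = _ := by module
  calc ‖w - v‖
      ≤ ‖t • (f v - f u)‖ + ‖(t - s) • (f u - T u)‖ + ‖(1 - t) • (T' v - T u)‖ :=
        hdiff ▸ norm_add₃_le
    _ = t * ‖f v - f u‖ + |t - s| * ‖f u - T u‖ + (1 - t) * ‖T' v - T u‖ := by
        rw [norm_smul, norm_smul, norm_smul, Real.norm_of_nonneg ht.1, Real.norm_of_nonneg h1t,
          Real.norm_eq_abs]
    _ ≤ t * (α * ‖v - u‖) + |t - s| * R + (1 - t) * (‖v - u‖ + L * R) := by
        gcongr
        exact ht.1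
    _ = (1 - (1 - α) * t) * ‖v - u‖ + R * (|t - s| + (1 - t) * L) := by ring

end Normed

theorem genVAM_consecutive_estimate_general {X : Type*} [NormedAddCommGroup X] [NormedSpace ℝ X]
    (C : Set X) (hC : Convex ℝ C)
    (f : X → X) (α : ℝ) (hα0 : 0 ≤ α) (hα1 : α < 1)
    (hfC : ∀ x ∈ C, f x ∈ C)
    (hf : ∀ x ∈ C, ∀ y ∈ C, ‖f x - f y‖ ≤ α * ‖x - y‖)
    (T : ℕ → X → X) (hTC : ∀ n, ∀ x ∈ C, T n x ∈ C)
    (hT : ∀ n, ∀ x ∈ C, ∀ y ∈ C, ‖T n x - T n y‖ ≤ ‖x - y‖)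
    (z : X) (hz : z ∈ C) (hzfix : ∀ n, T n z = z)
    (a : ℕ → ℝ) (ha : ∀ n, a n ∈ Set.Icc (0 : ℝ) 1)
    (x : ℕ → X) (hx0 : x 0 ∈ C)
    (hx : ∀ n, x (n + 1) = a n • f (x n) + (1 - a n) • T n (x n))
    (K : ℕ)
    (hK1 : ‖x 0 - z‖ ≤ K) (hK2 : ‖f z - z‖ / (1 - α) ≤ K)
    (lam : ℕ → ℝ)
    (n : ℕ)
    (hRes : ∀ y ∈ C, ‖T n y - T (n + 1) y‖ ≤ |1 - lam (n + 1) / lam n| * ‖y - T n y‖) :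
    ‖x (n + 2) - x (n + 1)‖ ≤ (1 - (1 - α) * a (n + 1)) * ‖x (n + 1) - x n‖ +
      2 * K * (|a (n + 1) - a n| + (1 - a (n + 1)) * |1 - lam (n + 1) / lam n|) := by
  set S := C ∩ closedBall z K
  have hfS : MapsTo f S S := mapsTo_inter_closedBall_of_lipschitz hα0 hfC hz hf
    ((div_le_iff₀ (sub_pos.2 hα1)).1 hK2)
  -- each `T m` is the case `α = 1` of the same lemma, with `z` as fixed point
  have hTS : ∀ m, MapsTo (T m) S S := fun m ↦
    mapsTo_inter_closedBall_of_lipschitz zero_le_one (hTC m) hz (by simpa using hT m)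
      (by simp [hzfix m])
  have hxS : ∀ m, x m ∈ S := (hC.inter (convex_closedBall z K)).viscosity_iterate_mem hfS hTS ha
    ⟨hx0, mem_closedBall_iff_norm.2 hK1⟩ hx
  obtain ⟨hnC, hnB⟩ := hxS n
  obtain ⟨hn1C, -⟩ := hxS (n + 1)
  exact norm_viscosity_step_sub_le (hx n) (hx (n + 1)) (ha (n + 1)) (hf _ hn1C _ hnC)
    (hT _ _ hn1C _ hnC) (hRes _ hnC) (abs_nonneg _)
    (norm_sub_le_two_mul_of_mem_closedBall (hfS ⟨hnC, hnB⟩).2 (hTS n ⟨hnC, hnB⟩).2)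
    (norm_sub_le_two_mul_of_mem_closedBall hnB (hTS n ⟨hnC, hnB⟩).2)

/-- In the genVAM setting, if `(T_n)` satisfies `Res((λ_n), n, n+1)` then
`‖x_{n+2} - x_{n+1}‖ ≤ β_n ‖x_{n+1} - x_n‖ + 2 K_z (|α_{n+1} - α_n| + (1-α_{n+1})|1 - λ_{n+1}/λ_n|)`
where `β_n = 1 - (1-α) α_{n+1}`. -/
theorem genVAM_consecutive_estimate {X : Type*} [NormedAddCommGroup X] [NormedSpace ℝ X]
    (C : Set X) (hCne : C.Nonempty) (hC : Convex ℝ C)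
    (f : X → X) (α : ℝ) (hα0 : 0 ≤ α) (hα1 : α < 1)
    (hfC : ∀ x ∈ C, f x ∈ C)
    (hf : ∀ x ∈ C, ∀ y ∈ C, ‖f x - f y‖ ≤ α * ‖x - y‖)
    (T : ℕ → X → X) (hTC : ∀ n, ∀ x ∈ C, T n x ∈ C)
    (hT : ∀ n, ∀ x ∈ C, ∀ y ∈ C, ‖T n x - T n y‖ ≤ ‖x - y‖)
    (z : X) (hz : z ∈ C) (hzfix : ∀ n, T n z = z)
    (a : ℕ → ℝ) (ha : ∀ n, a n ∈ Set.Icc (0 : ℝ) 1)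
    (x : ℕ → X) (hx0 : x 0 ∈ C)
    (hx : ∀ n, x (n + 1) = a n • f (x n) + (1 - a n) • T n (x n))
    (K : ℕ) (hK : 1 ≤ K)
    (hK1 : ‖x 0 - z‖ ≤ K) (hK2 : ‖f z - z‖ / (1 - α) ≤ K)
    (lam : ℕ → ℝ) (hlam : ∀ n, 0 < lam n)
    (n : ℕ)
    (hRes : ∀ y ∈ C, ‖T n y - T (n + 1) y‖ ≤ |1 - lam (n + 1) / lam n| * ‖y - T n y‖) :
    ‖x (n + 2) - x (n + 1)‖ ≤ (1 - (1 - α) * a (n + 1)) * ‖x (n + 1) - x n‖ +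
      2 * K * (|a (n + 1) - a n| + (1 - a (n + 1)) * |1 - lam (n + 1) / lam n|) :=
  genVAM_consecutive_estimate_general C hC f α hα0 hα1 hfC hf T hTC hT z hz hzfix a ha x hx0 hx K
    hK1 hK2 lam n hRes
end

section
/- In the genVAM setting in a real normed space, let (λ_n) ⊆ (0,∞) and assume: (T_n) satisfies Res((λ_n), n, n+1) for all n ∈ ℕ; Σ_{n=0}^∞ α_n diverges with rate of divergence σ₁; Σ_{n=0}^∞ |α_n - α_{n+1}| converges with Cauchy modulus σ₂; and Σ_{n=0}^∞ |1 - λ_{n+1}/λ_n| converges with Cauchy modulus θ₁. Then (x_n) is asymptotically regular with rate Φ(k) = σ₁⁺(⌈(χ(2k+1) + 1 + ⌈ln(4K_z(k+1))⌉)/(1-α)⌉ + 1), where χ(k) = max{σ₂(4K_z(k+1) - 1), θ₁(4K_z(k+1) - 1)} and σ₁⁺(n) = max{σ₁(i) : 0 ≤ i ≤ n}; that is, ‖x_{n+1} - x_n‖ ≤ 1/(k+1) for all k, n ∈ ℕ with n ≥ Φ(k). -/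
/-!
The iterates stay in `C ∩ closedBall z K`, a convex set mapped into itself by `f` and by every
`T n`. For `d n = ‖x (n + 1) - x n‖`, comparing two consecutive steps and using `Res` gives
`d (n + 1) ≤ (1 - (1 - α) a (n + 1)) d n + 2K (|a n - a (n + 1)| + |1 - λ (n + 1) / λ n|)`.
Unfolding this from `N + 1`, with `N = χ(2k + 1)`, bounds `d n` by `exp (-(1 - α) ∑ a i) · 2K`
plus a tail of the two convergent series. The Cauchy moduli make the tail at most
`1 / (2(k + 1))`, and the rate of divergence makes the exponential at most `1 / (4K(k + 1))`.
-/

open Finset Real Metric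

theorem le_exp_neg_sum_mul_add_sum {d b c : ℕ → ℝ} (hb : ∀ n, b n ∈ Set.Icc (0 : ℝ) 1)
    (hc : ∀ n, 0 ≤ c n) (hd : ∀ n, d (n + 1) ≤ (1 - b (n + 1)) * d n + c n)
    {m : ℕ} (hdm : 0 ≤ d m) {n : ℕ} (hmn : m ≤ n) :
    d n ≤ exp (-∑ i ∈ Ioc m n, b i) * d m + ∑ i ∈ Ico m n, c i := by
  induction n, hmn using Nat.le_induction with
  | base => simp
  | succ n hmn ih =>
    have hb1 : 0 ≤ 1 - b (n + 1) := sub_nonneg.2 (hb _).2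
    have hexp : 1 - b (n + 1) ≤ exp (-b (n + 1)) := one_sub_le_exp_neg _
    have hsum : 0 ≤ ∑ i ∈ Ico m n, c i := sum_nonneg fun i _ => hc i
    rw [sum_Ioc_succ_top hmn, sum_Ico_succ_top hmn, neg_add, exp_add]
    calc d (n + 1) ≤ (1 - b (n + 1)) * (exp (-∑ i ∈ Ioc m n, b i) * d m + ∑ i ∈ Ico m n, c i)
          + c n := by grw [hd n, ih]
      _ ≤ exp (-b (n + 1)) * exp (-∑ i ∈ Ioc m n, b i) * d m + (∑ i ∈ Ico m n, c i + c n) := by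
          have hE : 0 ≤ exp (-∑ i ∈ Ioc m n, b i) * d m := mul_nonneg (exp_pos _).le hdm
          have := mul_le_mul_of_nonneg_right hexp hE
          nlinarith [(hb (n + 1)).1]
      _ = _ := by ring

theorem le_mul_sum_Ioc_of_divergenceRate {a : ℕ → ℝ} (ha : ∀ i, a i ∈ Set.Icc (0 : ℝ) 1)
    {σ : ℕ → ℕ} (hσ : ∀ n : ℕ, (n : ℝ) ≤ ∑ i ∈ range (σ n + 1), a i)
    {β t : ℝ} (hβ0 : 0 ≤ β) (hβ1 : β ≤ 1) (ht : 0 ≤ t) {j M n : ℕ}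
    (hM : j + t ≤ β * M) (hn : σ (M + 1) ≤ n) :
    j ≤ n ∧ t ≤ β * ∑ i ∈ Ioc j n, a i := by
  have hMn : (M : ℝ) + 1 ≤ ∑ i ∈ range (n + 1), a i := by
    calc (M : ℝ) + 1 = ((M + 1 : ℕ) : ℝ) := by push_cast; ring
      _ ≤ ∑ i ∈ range (σ (M + 1) + 1), a i := hσ _
      _ ≤ ∑ i ∈ range (n + 1), a i :=
        sum_le_sum_of_subset_of_nonneg (range_subset_range.2 (by omega)) fun i _ _ => (ha i).1
  have hrange : ∀ m, ∑ i ∈ range m, a i ≤ m := fun m => by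
    simpa using sum_le_sum fun i (_ : i ∈ range m) => (ha i).2
  have hβM : β * M ≤ M := mul_le_of_le_one_left M.cast_nonneg hβ1
  have hβj : β * j ≤ j := mul_le_of_le_one_left j.cast_nonneg hβ1
  have hjn : j ≤ n := by
    have := hrange (n + 1)
    push_cast at this
    exact_mod_cast (by linarith : (j : ℝ) ≤ n)
  refine ⟨hjn, ?_⟩
  have hsplit := sum_range_add_sum_Ico a (by omega : j + 1 ≤ n + 1)
  rw [Ico_add_one_add_one_eq_Ioc] at hsplit
  have hj := hrange (j + 1)
  push_cast at hj
  have := mul_le_mul_of_nonneg_left (by linarith : (M : ℝ) - j ≤ ∑ i ∈ Ioc j n, a i) hβ0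
  nlinarith

theorem sum_Ico_le_of_forall_sum_Icc_le {u : ℕ → ℝ} {N : ℕ} {ε : ℝ}
    (h : ∀ p : ℕ, ∑ i ∈ Icc (N + 1) (N + p), u i ≤ ε) {n : ℕ} (hn : N < n) :
    ∑ i ∈ Ico (N + 1) n, u i ≤ ε := by
  obtain ⟨p, rfl⟩ : ∃ p, n = N + p + 1 := ⟨n - N - 1, by omega⟩
  simpa [Ico_add_one_right_eq_Icc] using h p

theorem norm_sub_le_of_mem_closedBall {E : Type*} [SeminormedAddCommGroup E] {u v z : E} {K : ℝ}
    (hu : u ∈ closedBall z K) (hv : v ∈ closedBall z K) : ‖u - v‖ ≤ 2 * K := by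
  rw [← dist_eq_norm]
  linarith [dist_triangle_right u v z, mem_closedBall.1 hu, mem_closedBall.1 hv]

theorem mapsTo_inter_closedBall_of_contraction {E : Type*} [SeminormedAddCommGroup E]
    {C : Set E} {f : E → E} {α K : ℝ} (hα0 : 0 ≤ α) (hfC : Set.MapsTo f C C)
    (hf : ∀ x ∈ C, ∀ y ∈ C, ‖f x - f y‖ ≤ α * ‖x - y‖) {z : E} (hz : z ∈ C)
    (hfz : ‖f z - z‖ ≤ (1 - α) * K) :
    Set.MapsTo f (C ∩ closedBall z K) (C ∩ closedBall z K) := by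
  rintro y ⟨hy, hyz⟩
  rw [mem_closedBall_iff_norm] at hyz
  refine ⟨hfC hy, mem_closedBall_iff_norm.2 ?_⟩
  have := norm_sub_le_norm_sub_add_norm_sub (f y) (f z) z
  have := hf y hy z hz
  have := mul_le_mul_of_nonneg_left hyz hα0
  linarith

theorem mapsTo_inter_closedBall_of_nonexpansive {E : Type*} [SeminormedAddCommGroup E]
    {C : Set E} {T : E → E} (hTC : Set.MapsTo T C C)
    (hT : ∀ x ∈ C, ∀ y ∈ C, ‖T x - T y‖ ≤ ‖x - y‖) {z : E} (hz : z ∈ C) (hTz : T z = z)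
    (K : ℝ) : Set.MapsTo T (C ∩ closedBall z K) (C ∩ closedBall z K) := by
  rintro y ⟨hy, hyz⟩
  refine ⟨hTC hy, mem_closedBall_iff_norm.2 ?_⟩
  calc ‖T y - z‖ = ‖T y - T z‖ := by rw [hTz]
    _ ≤ ‖y - z‖ := hT y hy z hz
    _ ≤ K := mem_closedBall_iff_norm.1 hyz

theorem le_one_div_add_one_of_le_one_sub_mul_add {d a u v : ℕ → ℝ} {α : ℝ} {K : ℕ}
    (hα0 : 0 ≤ α) (hα1 : α < 1) (hK : 1 ≤ K) (ha : ∀ n, a n ∈ Set.Icc (0 : ℝ) 1)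
    (hd0 : ∀ n, 0 ≤ d n) (hdK : ∀ n, d n ≤ 2 * K) (hu : ∀ n, 0 ≤ u n) (hv : ∀ n, 0 ≤ v n)
    (hd : ∀ n, d (n + 1) ≤ (1 - (1 - α) * a (n + 1)) * d n + 2 * K * (u n + v n))
    {σ₁ : ℕ → ℕ} (hσ₁ : ∀ n : ℕ, (n : ℝ) ≤ ∑ i ∈ range (σ₁ n + 1), a i)
    {σ₂ : ℕ → ℕ}
    (hσ₂ : ∀ k n : ℕ, σ₂ k ≤ n → ∀ p : ℕ, ∑ i ∈ Icc (n + 1) (n + p), u i ≤ 1 / ((k : ℝ) + 1))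
    {θ₁ : ℕ → ℕ}
    (hθ₁ : ∀ k n : ℕ, θ₁ k ≤ n → ∀ p : ℕ, ∑ i ∈ Icc (n + 1) (n + p), v i ≤ 1 / ((k : ℝ) + 1))
    (k n : ℕ)
    (hn : (range (⌈((max (σ₂ (4 * K * (2 * k + 1 + 1) - 1)) (θ₁ (4 * K * (2 * k + 1 + 1) - 1))
            + 1 + ⌈log (4 * (K : ℝ) * ((k : ℝ) + 1))⌉₊ : ℕ) : ℝ) / (1 - α)⌉₊ + 1 + 1)).sup σ₁
          ≤ n) :
    d n ≤ 1 / ((k : ℝ) + 1) := by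
  set N := max (σ₂ (4 * K * (2 * k + 1 + 1) - 1)) (θ₁ (4 * K * (2 * k + 1 + 1) - 1))
  set L := ⌈log (4 * (K : ℝ) * ((k : ℝ) + 1))⌉₊
  set M := ⌈((N + 1 + L : ℕ) : ℝ) / (1 - α)⌉₊
  have h1α : 0 < 1 - α := by linarith
  have hKpos : (0 : ℝ) < K := by exact_mod_cast hK
  obtain ⟨hNn, hL⟩ := le_mul_sum_Ioc_of_divergenceRate ha hσ₁ h1α.le (by linarith) L.cast_nonneg
    (j := N + 1) (M := M)
    (by have hM : ((N + 1 + L : ℕ) : ℝ) / (1 - α) ≤ M := Nat.le_ceil _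
        rw [div_le_iff₀ h1α] at hM; push_cast at hM ⊢; linarith)
    ((le_sup (self_mem_range_succ _)).trans hn)
  have hK8 : ((4 * K * (2 * k + 1 + 1) - 1 : ℕ) : ℝ) + 1 = 8 * K * (k + 1) := by
    rw [← Nat.cast_add_one, Nat.sub_add_cancel (Nat.mul_pos (by omega) (by omega))]
    push_cast; ring
  have hu' := sum_Ico_le_of_forall_sum_Icc_le (hσ₂ _ N (le_max_left _ _)) hNn
  have hv' := sum_Ico_le_of_forall_sum_Icc_le (hθ₁ _ N (le_max_right _ _)) hNn
  rw [hK8] at hu' hv'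
  have hexp : exp (-((1 - α) * ∑ i ∈ Ioc (N + 1) n, a i)) ≤ (4 * (K : ℝ) * (k + 1))⁻¹ := by
    rw [← exp_log (by positivity : (0 : ℝ) < 4 * K * (k + 1)), ← exp_neg]
    exact exp_le_exp.2 (by linarith [Nat.le_ceil (log (4 * (K : ℝ) * ((k : ℝ) + 1)))])
  calc d n
      ≤ exp (-∑ i ∈ Ioc (N + 1) n, (1 - α) * a i) * d (N + 1)
        + ∑ i ∈ Ico (N + 1) n, 2 * K * (u i + v i) :=
        le_exp_neg_sum_mul_add_sum
          (fun i => ⟨mul_nonneg h1α.le (ha i).1, mul_le_one₀ (by linarith) (ha i).1 (ha i).2⟩)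
          (fun i => by have := hu i; have := hv i; positivity) hd (hd0 _) hNn
    _ ≤ (4 * (K : ℝ) * (k + 1))⁻¹ * (2 * K)
        + 2 * K * (1 / (8 * K * (k + 1)) + 1 / (8 * K * (k + 1))) := by
        rw [← mul_sum, ← mul_sum, sum_add_distrib]
        gcongr
        · exact hd0 _
        · exact hdK _
    _ = 1 / (k + 1) := by field_simp; ring

section GenVAM

variable {X : Type*} [NormedAddCommGroup X] [NormedSpace ℝ X] {f : X → X} {T : ℕ → X → X}
  {a : ℕ → ℝ} {x : ℕ → X}

theorem genVAM_mem_of_mapsTo {S : Set X} (hS : Convex ℝ S) (hfS : Set.MapsTo f S S)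
    (hTS : ∀ n, Set.MapsTo (T n) S S) (ha : ∀ n, a n ∈ Set.Icc (0 : ℝ) 1) (hx0 : x 0 ∈ S)
    (hx : ∀ n, x (n + 1) = a n • f (x n) + (1 - a n) • T n (x n)) (n : ℕ) : x n ∈ S := by
  induction n with
  | zero => exact hx0
  | succ n ih =>
    rw [hx n]
    exact hS (hfS ih) (hTS n ih) (ha n).1 (sub_nonneg.2 (ha n).2) (by ring)

theorem genVAM_norm_sub_succ_le {C : Set X} {α : ℝ}
    (hf : ∀ x ∈ C, ∀ y ∈ C, ‖f x - f y‖ ≤ α * ‖x - y‖)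
    (hT : ∀ n, ∀ x ∈ C, ∀ y ∈ C, ‖T n x - T n y‖ ≤ ‖x - y‖)
    (ha : ∀ n, a n ∈ Set.Icc (0 : ℝ) 1)
    (hx : ∀ n, x (n + 1) = a n • f (x n) + (1 - a n) • T n (x n)) (hxC : ∀ n, x n ∈ C)
    (m : ℕ) :
    ‖x (m + 1 + 1) - x (m + 1)‖ ≤ (1 - (1 - α) * a (m + 1)) * ‖x (m + 1) - x m‖
      + |a m - a (m + 1)| * ‖f (x m) - T m (x m)‖ + ‖T m (x m) - T (m + 1) (x m)‖ := by
  have hsplit : x (m + 1 + 1) - x (m + 1) =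
      a (m + 1) • (f (x (m + 1)) - f (x m))
      + (1 - a (m + 1)) • (T (m + 1) (x (m + 1)) - T (m + 1) (x m))
      + (1 - a (m + 1)) • (T (m + 1) (x m) - T m (x m))
      + (a (m + 1) - a m) • (f (x m) - T m (x m)) := by
    rw [hx (m + 1), hx m]; module
  obtain ⟨ha0, ha1⟩ := ha (m + 1)
  have hfx := hf _ (hxC (m + 1)) _ (hxC m)
  have hTx := hT (m + 1) _ (hxC (m + 1)) _ (hxC m)
  calc ‖x (m + 1 + 1) - x (m + 1)‖
      ≤ a (m + 1) * ‖f (x (m + 1)) - f (x m)‖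
        + (1 - a (m + 1)) * ‖T (m + 1) (x (m + 1)) - T (m + 1) (x m)‖
        + (1 - a (m + 1)) * ‖T m (x m) - T (m + 1) (x m)‖
        + |a m - a (m + 1)| * ‖f (x m) - T m (x m)‖ := by
        rw [hsplit, norm_sub_rev (T m (x m)), abs_sub_comm]
        refine norm_add₄_le.trans_eq ?_
        simp only [norm_smul, Real.norm_eq_abs, abs_of_nonneg ha0,
          abs_of_nonneg (sub_nonneg.2 ha1)]
    _ ≤ a (m + 1) * (α * ‖x (m + 1) - x m‖) + (1 - a (m + 1)) * ‖x (m + 1) - x m‖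
        + 1 * ‖T m (x m) - T (m + 1) (x m)‖
        + |a m - a (m + 1)| * ‖f (x m) - T m (x m)‖ := by
        gcongr
        linarith
    _ = _ := by ring

theorem genVAM_norm_sub_succ_le_of_res {C : Set X} {α D : ℝ}
    (hf : ∀ x ∈ C, ∀ y ∈ C, ‖f x - f y‖ ≤ α * ‖x - y‖)
    (hT : ∀ n, ∀ x ∈ C, ∀ y ∈ C, ‖T n x - T n y‖ ≤ ‖x - y‖)
    (ha : ∀ n, a n ∈ Set.Icc (0 : ℝ) 1)
    (hx : ∀ n, x (n + 1) = a n • f (x n) + (1 - a n) • T n (x n)) (hxC : ∀ n, x n ∈ C)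
    {lam : ℕ → ℝ}
    (hRes : ∀ n : ℕ, ∀ y ∈ C, ‖T n y - T (n + 1) y‖ ≤ |1 - lam (n + 1) / lam n| * ‖y - T n y‖)
    {m : ℕ} (hfT : ‖f (x m) - T m (x m)‖ ≤ D) (hxT : ‖x m - T m (x m)‖ ≤ D) :
    ‖x (m + 1 + 1) - x (m + 1)‖ ≤ (1 - (1 - α) * a (m + 1)) * ‖x (m + 1) - x m‖
      + D * (|a m - a (m + 1)| + |1 - lam (m + 1) / lam m|) := by
  calc ‖x (m + 1 + 1) - x (m + 1)‖
      ≤ (1 - (1 - α) * a (m + 1)) * ‖x (m + 1) - x m‖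
        + |a m - a (m + 1)| * ‖f (x m) - T m (x m)‖
        + |1 - lam (m + 1) / lam m| * ‖x m - T m (x m)‖ :=
        (genVAM_norm_sub_succ_le hf hT ha hx hxC m).trans (by grw [hRes m _ (hxC m)])
    _ ≤ (1 - (1 - α) * a (m + 1)) * ‖x (m + 1) - x m‖
        + |a m - a (m + 1)| * D + |1 - lam (m + 1) / lam m| * D := by gcongr
    _ = _ := by ring

end GenVAM

theorem genVAM_rate_of_asymptotic_regularity_general {X : Type*} [NormedAddCommGroup X]
    [NormedSpace ℝ X]
    (C : Set X) (hC : Convex ℝ C)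
    (f : X → X) (α : ℝ) (hα0 : 0 ≤ α) (hα1 : α < 1)
    (hfC : ∀ x ∈ C, f x ∈ C)
    (hf : ∀ x ∈ C, ∀ y ∈ C, ‖f x - f y‖ ≤ α * ‖x - y‖)
    (T : ℕ → X → X) (hTC : ∀ n, ∀ x ∈ C, T n x ∈ C)
    (hT : ∀ n, ∀ x ∈ C, ∀ y ∈ C, ‖T n x - T n y‖ ≤ ‖x - y‖)
    (z : X) (hz : z ∈ C) (hzfix : ∀ n, T n z = z)
    (a : ℕ → ℝ) (ha : ∀ n, a n ∈ Set.Icc (0 : ℝ) 1)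
    (x : ℕ → X) (hx0 : x 0 ∈ C)
    (hx : ∀ n, x (n + 1) = a n • f (x n) + (1 - a n) • T n (x n))
    (K : ℕ) (hK : 1 ≤ K)
    (hK1 : ‖x 0 - z‖ ≤ K) (hK2 : ‖f z - z‖ / (1 - α) ≤ K)
    (lam : ℕ → ℝ)
    (hRes : ∀ n : ℕ, ∀ y ∈ C, ‖T n y - T (n + 1) y‖ ≤ |1 - lam (n + 1) / lam n| * ‖y - T n y‖)
    (σ₁ : ℕ → ℕ) (hσ₁ : ∀ n : ℕ, (n : ℝ) ≤ ∑ i ∈ Finset.range (σ₁ n + 1), a i)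
    (σ₂ : ℕ → ℕ)
    (hσ₂ : ∀ k n : ℕ, σ₂ k ≤ n → ∀ p : ℕ,
      ∑ i ∈ Finset.Icc (n + 1) (n + p), |a i - a (i + 1)| ≤ 1 / ((k : ℝ) + 1))
    (θ₁ : ℕ → ℕ)
    (hθ₁ : ∀ k n : ℕ, θ₁ k ≤ n → ∀ p : ℕ,
      ∑ i ∈ Finset.Icc (n + 1) (n + p), |1 - lam (i + 1) / lam i| ≤ 1 / ((k : ℝ) + 1)) :
    ∀ k n : ℕ,
      (Finset.range
        (Nat.ceil ((((max (σ₂ (4 * K * (2 * k + 1 + 1) - 1)) (θ₁ (4 * K * (2 * k + 1 + 1) - 1))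
            + 1 + Nat.ceil (Real.log (4 * (K : ℝ) * ((k : ℝ) + 1))) : ℕ) : ℝ)) / (1 - α))
          + 1 + 1)).sup σ₁ ≤ n →
      ‖x (n + 1) - x n‖ ≤ 1 / ((k : ℝ) + 1) := by
  intro k n hn
  have h1α : 0 < 1 - α := by linarith
  set S := C ∩ closedBall z K
  have hfS : Set.MapsTo f S S := mapsTo_inter_closedBall_of_contraction hα0 (fun y hy => hfC y hy)
    hf hz (by rwa [div_le_iff₀ h1α, mul_comm] at hK2)
  have hTS : ∀ j, Set.MapsTo (T j) S S := fun j =>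
    mapsTo_inter_closedBall_of_nonexpansive (fun y hy => hTC j y hy) (hT j) hz (hzfix j) K
  have hxS : ∀ m, x m ∈ S := genVAM_mem_of_mapsTo (hC.inter (convex_closedBall z K)) hfS hTS ha
    ⟨hx0, mem_closedBall_iff_norm.2 hK1⟩ hx
  have hrec : ∀ m, ‖x (m + 1 + 1) - x (m + 1)‖ ≤ (1 - (1 - α) * a (m + 1)) * ‖x (m + 1) - x m‖
      + 2 * K * (|a m - a (m + 1)| + |1 - lam (m + 1) / lam m|) := fun m =>
    genVAM_norm_sub_succ_le_of_res hf hT ha hx (fun m => (hxS m).1) hRes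
      (norm_sub_le_of_mem_closedBall (hfS (hxS m)).2 (hTS m (hxS m)).2)
      (norm_sub_le_of_mem_closedBall (hxS m).2 (hTS m (hxS m)).2)
  exact le_one_div_add_one_of_le_one_sub_mul_add (d := fun m => ‖x (m + 1) - x m‖) hα0 hα1 hK ha
    (fun _ => norm_nonneg _) (fun m => norm_sub_le_of_mem_closedBall (hxS _).2 (hxS _).2)
    (fun _ => abs_nonneg _) (fun _ => abs_nonneg _) hrec hσ₁ hσ₂ hθ₁ k n hn

/-- Quantitative asymptotic regularity of the genVAM iteration: under `Res((λ_n), n, n+1)`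
and quantitative hypotheses (H1α_n), (H2α_n), (H1λ_n), the iteration `(x_n)` is
asymptotically regular with rate
`Φ(k) = σ₁⁺(⌈(χ(2k+1) + 1 + ⌈ln(4K_z(k+1))⌉)/(1-α)⌉ + 1)`, where
`χ(k) = max {σ₂(4K_z(k+1)-1), θ₁(4K_z(k+1)-1)}` and `σ₁⁺(n) = max {σ₁(i) : i ≤ n}`. -/
theorem genVAM_rate_of_asymptotic_regularity {X : Type*} [NormedAddCommGroup X]
    [NormedSpace ℝ X]
    (C : Set X) (hCne : C.Nonempty) (hC : Convex ℝ C)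
    (f : X → X) (α : ℝ) (hα0 : 0 ≤ α) (hα1 : α < 1)
    (hfC : ∀ x ∈ C, f x ∈ C)
    (hf : ∀ x ∈ C, ∀ y ∈ C, ‖f x - f y‖ ≤ α * ‖x - y‖)
    (T : ℕ → X → X) (hTC : ∀ n, ∀ x ∈ C, T n x ∈ C)
    (hT : ∀ n, ∀ x ∈ C, ∀ y ∈ C, ‖T n x - T n y‖ ≤ ‖x - y‖)
    (z : X) (hz : z ∈ C) (hzfix : ∀ n, T n z = z)
    (a : ℕ → ℝ) (ha : ∀ n, a n ∈ Set.Icc (0 : ℝ) 1)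
    (x : ℕ → X) (hx0 : x 0 ∈ C)
    (hx : ∀ n, x (n + 1) = a n • f (x n) + (1 - a n) • T n (x n))
    (K : ℕ) (hK : 1 ≤ K)
    (hK1 : ‖x 0 - z‖ ≤ K) (hK2 : ‖f z - z‖ / (1 - α) ≤ K)
    (lam : ℕ → ℝ) (hlam : ∀ n, 0 < lam n)
    (hRes : ∀ n : ℕ, ∀ y ∈ C, ‖T n y - T (n + 1) y‖ ≤ |1 - lam (n + 1) / lam n| * ‖y - T n y‖)
    (σ₁ : ℕ → ℕ) (hσ₁ : ∀ n : ℕ, (n : ℝ) ≤ ∑ i ∈ Finset.range (σ₁ n + 1), a i)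
    (σ₂ : ℕ → ℕ)
    (hσ₂ : ∀ k n : ℕ, σ₂ k ≤ n → ∀ p : ℕ,
      ∑ i ∈ Finset.Icc (n + 1) (n + p), |a i - a (i + 1)| ≤ 1 / ((k : ℝ) + 1))
    (θ₁ : ℕ → ℕ)
    (hθ₁ : ∀ k n : ℕ, θ₁ k ≤ n → ∀ p : ℕ,
      ∑ i ∈ Finset.Icc (n + 1) (n + p), |1 - lam (i + 1) / lam i| ≤ 1 / ((k : ℝ) + 1)) :
    ∀ k n : ℕ,
      (Finset.range
        (Nat.ceil ((((max (σ₂ (4 * K * (2 * k + 1 + 1) - 1)) (θ₁ (4 * K * (2 * k + 1 + 1) - 1))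
            + 1 + Nat.ceil (Real.log (4 * (K : ℝ) * ((k : ℝ) + 1))) : ℕ) : ℝ)) / (1 - α))
          + 1 + 1)).sup σ₁ ≤ n →
      ‖x (n + 1) - x n‖ ≤ 1 / ((k : ℝ) + 1) :=
  genVAM_rate_of_asymptotic_regularity_general C hC f α hα0 hα1 hfC hf T hTC hT z hz hzfix a ha x
    hx0 hx K hK hK1 hK2 lam hRes σ₁ hσ₁ σ₂ hσ₂ θ₁ hθ₁
end

section
/- In the genVAM setting in a real normed space, let Φ be a rate of asymptotic regularity of (x_n) and assume α_n → 0 with rate of convergence σ₃. Then Ψ(k) = max{σ₃(4K_z(k+1) - 1), Φ(2k+1)} is a rate of (T_n)-asymptotic regularity of (x_n); that is, ‖x_n - T_n x_n‖ ≤ 1/(k+1) for all k, n ∈ ℕ with n ≥ Ψ(k). -/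
/-!
The set `C ∩ closedBall z K` is convex and invariant under `f` (a contraction whose displacement
at `z` is at most `(1 - α) K`) and under every `Tₙ` (nonexpansive, fixing `z`), so the whole
iteration stays in it. Hence `‖f xₙ - Tₙ xₙ‖ ≤ 2K`, and since
`xₙ - Tₙ xₙ = (xₙ - xₙ₊₁) + αₙ (f xₙ - Tₙ xₙ)`, both summands are at most `1 / (2(k + 1))`
once `n ≥ Ψ(k)`.
-/

open Metric

theorem mem_closedBall_of_contraction {X : Type*} [SeminormedAddCommGroup X] {f : X → X}
    {α K : ℝ} {y z : X} (hα : 0 ≤ α) (hf : ‖f y - f z‖ ≤ α * ‖y - z‖)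
    (hy : y ∈ closedBall z K) (hz : ‖f z - z‖ ≤ (1 - α) * K) :
    f y ∈ closedBall z K := by
  rw [mem_closedBall_iff_norm] at hy ⊢
  calc ‖f y - z‖ ≤ ‖f y - f z‖ + ‖f z - z‖ := norm_sub_le_norm_sub_add_norm_sub _ _ _
    _ ≤ α * K + (1 - α) * K := add_le_add (hf.trans (mul_le_mul_of_nonneg_left hy hα)) hz
    _ = K := by ring

section Iteration

variable {X : Type*} [NormedAddCommGroup X] [NormedSpace ℝ X]

theorem convex_iteration_mem {S : Set X} (hS : Convex ℝ S) {f : X → X} (hf : Set.MapsTo f S S)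
    {T : ℕ → X → X} (hT : ∀ n, Set.MapsTo (T n) S S) {a : ℕ → ℝ} (ha : ∀ n, a n ∈ Set.Icc (0 : ℝ) 1)
    {x : ℕ → X} (hx0 : x 0 ∈ S) (hx : ∀ n, x (n + 1) = a n • f (x n) + (1 - a n) • T n (x n)) :
    ∀ n, x n ∈ S
  | 0 => hx0
  | n + 1 => by
    have hxn := convex_iteration_mem hS hf hT ha hx0 hx n
    rw [hx n]
    exact hS (hf hxn) (hT n hxn) (ha n).1 (sub_nonneg.mpr (ha n).2) (add_sub_cancel _ _)

theorem norm_sub_le_add_mul_norm_sub_of_convex_comb (y u v : X) {a : ℝ} (ha : 0 ≤ a) :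
    ‖y - v‖ ≤ ‖a • u + (1 - a) • v - y‖ + a * ‖u - v‖ := by
  have hsplit : y - v = -(a • u + (1 - a) • v - y) + a • (u - v) := by module
  calc ‖y - v‖ ≤ ‖-(a • u + (1 - a) • v - y)‖ + ‖a • (u - v)‖ := hsplit ▸ norm_add_le _ _
    _ = ‖a • u + (1 - a) • v - y‖ + a * ‖u - v‖ := by
      rw [norm_neg, norm_smul, Real.norm_of_nonneg ha]

end Iteration

theorem mul_two_mul_le_of_le_inv_pred {a : ℝ} {K k : ℕ}
    (ha : a ≤ 1 / (((4 * K * (k + 1) - 1 : ℕ) : ℝ) + 1)) :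
    a * (2 * K) ≤ 1 / (2 * (k + 1)) := by
  -- For `K = 0` the truncated subtraction makes the index `0`, but then the left side vanishes.
  rcases K.eq_zero_or_pos with rfl | hK
  · simp only [CharP.cast_eq_zero, mul_zero]
    positivity
  · have hcast : (((4 * K * (k + 1) - 1 : ℕ) : ℝ) + 1) = 4 * K * (k + 1) := by
      rw [Nat.cast_sub (Nat.one_le_iff_ne_zero.mpr (by positivity))]
      push_cast
      ring
    rw [hcast] at ha
    calc a * (2 * K) ≤ 1 / (4 * K * (k + 1)) * (2 * K) := by gcongr
      _ = 1 / (2 * (k + 1)) := by field_simp; ring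

theorem genVAM_rate_of_Tn_asymptotic_regularity_general {X : Type*} [NormedAddCommGroup X]
    [NormedSpace ℝ X]
    (C : Set X) (hC : Convex ℝ C)
    (f : X → X) (α : ℝ) (hα0 : 0 ≤ α) (hα1 : α < 1)
    (hfC : ∀ x ∈ C, f x ∈ C)
    (hf : ∀ x ∈ C, ∀ y ∈ C, ‖f x - f y‖ ≤ α * ‖x - y‖)
    (T : ℕ → X → X) (hTC : ∀ n, ∀ x ∈ C, T n x ∈ C)
    (hT : ∀ n, ∀ x ∈ C, ∀ y ∈ C, ‖T n x - T n y‖ ≤ ‖x - y‖)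
    (z : X) (hz : z ∈ C) (hzfix : ∀ n, T n z = z)
    (a : ℕ → ℝ) (ha : ∀ n, a n ∈ Set.Icc (0 : ℝ) 1)
    (x : ℕ → X) (hx0 : x 0 ∈ C)
    (hx : ∀ n, x (n + 1) = a n • f (x n) + (1 - a n) • T n (x n))
    (K : ℕ)
    (hK1 : ‖x 0 - z‖ ≤ K) (hK2 : ‖f z - z‖ / (1 - α) ≤ K)
    (Φ : ℕ → ℕ) (hΦ : ∀ k n : ℕ, Φ k ≤ n → ‖x (n + 1) - x n‖ ≤ 1 / ((k : ℝ) + 1))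
    (σ₃ : ℕ → ℕ) (hσ₃ : ∀ k n : ℕ, σ₃ k ≤ n → a n ≤ 1 / ((k : ℝ) + 1)) :
    ∀ k n : ℕ, max (σ₃ (4 * K * (k + 1) - 1)) (Φ (2 * k + 1)) ≤ n →
      ‖x n - T n (x n)‖ ≤ 1 / ((k : ℝ) + 1) := by
  have hfz : ‖f z - z‖ ≤ (1 - α) * K := by
    rwa [div_le_iff₀ (sub_pos.mpr hα1), mul_comm] at hK2
  have hf_maps : Set.MapsTo f (C ∩ closedBall z K) (C ∩ closedBall z K) := fun y hy =>
    ⟨hfC y hy.1, mem_closedBall_of_contraction hα0 (hf y hy.1 z hz) hy.2 hfz⟩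
  have hT_maps : ∀ n, Set.MapsTo (T n) (C ∩ closedBall z K) (C ∩ closedBall z K) :=
    fun n y hy => ⟨hTC n y hy.1, mem_closedBall_of_contraction zero_le_one
      (by simpa using hT n y hy.1 z hz) hy.2 (by simp [hzfix n])⟩
  have hx_mem := convex_iteration_mem (hC.inter (convex_closedBall z K)) hf_maps hT_maps ha
    ⟨hx0, mem_closedBall_iff_norm.mpr hK1⟩ hx
  intro k n hn
  obtain ⟨hσn, hΦn⟩ := max_le_iff.mp hn
  have hgap : ‖f (x n) - T n (x n)‖ ≤ 2 * K := by
    rw [← dist_eq_norm, two_mul]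
    exact (dist_triangle_right _ _ z).trans
      (add_le_add (hf_maps (hx_mem n)).2 (hT_maps n (hx_mem n)).2)
  have hΦn' : ‖x (n + 1) - x n‖ ≤ 1 / (2 * (k + 1)) := by
    simpa [add_assoc, one_add_one_eq_two, ← mul_add_one] using hΦ _ n hΦn
  calc ‖x n - T n (x n)‖ ≤ ‖x (n + 1) - x n‖ + a n * ‖f (x n) - T n (x n)‖ :=
        hx n ▸ norm_sub_le_add_mul_norm_sub_of_convex_comb _ _ _ (ha n).1
    _ ≤ 1 / (2 * (k + 1)) + 1 / (2 * (k + 1)) := add_le_add hΦn'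
        ((mul_le_mul_of_nonneg_left hgap (ha n).1).trans
          (mul_two_mul_le_of_le_inv_pred (hσ₃ _ n hσn)))
    _ = 1 / ((k : ℝ) + 1) := by field_simp; ring

/-- If `Φ` is a rate of asymptotic regularity of the genVAM iteration `(x_n)` and
`α_n → 0` with rate `σ₃`, then `Ψ(k) = max {σ₃(4K_z(k+1)-1), Φ(2k+1)}` is a rate of
`(T_n)`-asymptotic regularity of `(x_n)`. -/
theorem genVAM_rate_of_Tn_asymptotic_regularity {X : Type*} [NormedAddCommGroup X]
    [NormedSpace ℝ X]
    (C : Set X) (hCne : C.Nonempty) (hC : Convex ℝ C)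
    (f : X → X) (α : ℝ) (hα0 : 0 ≤ α) (hα1 : α < 1)
    (hfC : ∀ x ∈ C, f x ∈ C)
    (hf : ∀ x ∈ C, ∀ y ∈ C, ‖f x - f y‖ ≤ α * ‖x - y‖)
    (T : ℕ → X → X) (hTC : ∀ n, ∀ x ∈ C, T n x ∈ C)
    (hT : ∀ n, ∀ x ∈ C, ∀ y ∈ C, ‖T n x - T n y‖ ≤ ‖x - y‖)
    (z : X) (hz : z ∈ C) (hzfix : ∀ n, T n z = z)
    (a : ℕ → ℝ) (ha : ∀ n, a n ∈ Set.Icc (0 : ℝ) 1)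
    (x : ℕ → X) (hx0 : x 0 ∈ C)
    (hx : ∀ n, x (n + 1) = a n • f (x n) + (1 - a n) • T n (x n))
    (K : ℕ) (hK : 1 ≤ K)
    (hK1 : ‖x 0 - z‖ ≤ K) (hK2 : ‖f z - z‖ / (1 - α) ≤ K)
    (Φ : ℕ → ℕ) (hΦ : ∀ k n : ℕ, Φ k ≤ n → ‖x (n + 1) - x n‖ ≤ 1 / ((k : ℝ) + 1))
    (σ₃ : ℕ → ℕ) (hσ₃ : ∀ k n : ℕ, σ₃ k ≤ n → a n ≤ 1 / ((k : ℝ) + 1)) :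
    ∀ k n : ℕ, max (σ₃ (4 * K * (k + 1) - 1)) (Φ (2 * k + 1)) ≤ n →
      ‖x n - T n (x n)‖ ≤ 1 / ((k : ℝ) + 1) :=
  genVAM_rate_of_Tn_asymptotic_regularity_general C hC f α hα0 hα1 hfC hf T hTC hT z hz hzfix a ha x
    hx0 hx K hK1 hK2 Φ hΦ σ₃ hσ₃
end

section
/- In the genVAM setting in a real normed space, let (λ_n) ⊆ (0,∞), let Ψ be a rate of (T_n)-asymptotic regularity of (x_n), and let m ∈ ℕ. Assume (T_n) satisfies Res((λ_n), n, m) for all n ∈ ℕ, that Λ ∈ ℕ, Λ ≥ 1, and N_Λ ∈ ℕ are such that λ_n ≥ 1/Λ for all n ≥ N_Λ, and that Λ_m ∈ ℕ, Λ_m ≥ 1, satisfies Λ_m ≥ λ_m. Then Ψ_m(k) = max{N_Λ, Ψ(Λ_m·Λ·(k+1) - 1), Ψ(2k+1)} is a rate of T_m-asymptotic regularity of (x_n); that is, ‖x_n - T_m x_n‖ ≤ 1/(k+1) for all k, n ∈ ℕ with n ≥ Ψ_m(k). -/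
/-!
Write `t = λ_m / λ_n`. The resolvent condition and the triangle inequality give
`‖x_n - T_m x_n‖ ≤ (1 + |1 - t|) ‖x_n - T_n x_n‖`. If `t ≤ 1` the factor is at most `2`, which is
absorbed by `Ψ(2k+1)`; otherwise it is `t ≤ Λ_m Λ` once `n ≥ N_Λ`, which is absorbed by
`Ψ(Λ_m Λ (k+1) - 1)`.
-/

theorem Convex.mem_of_recursion {X : Type*} [AddCommGroup X] [Module ℝ X] {C : Set X}
    (hC : Convex ℝ C) {f : X → X} (hfC : ∀ x ∈ C, f x ∈ C) {T : ℕ → X → X}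
    (hTC : ∀ n, ∀ x ∈ C, T n x ∈ C) {a : ℕ → ℝ} (ha : ∀ n, a n ∈ Set.Icc (0 : ℝ) 1)
    {x : ℕ → X} (hx0 : x 0 ∈ C) (hx : ∀ n, x (n + 1) = a n • f (x n) + (1 - a n) • T n (x n)) :
    ∀ n, x n ∈ C
  | 0 => hx0
  | n + 1 => by
    have hxn := hC.mem_of_recursion hfC hTC ha hx0 hx n
    rw [hx n]
    exact hC (hfC _ hxn) (hTC n _ hxn) (ha n).1 (sub_nonneg.2 (ha n).2) (add_sub_cancel _ _)

theorem norm_sub_le_one_add_mul_of_norm_sub_le {E : Type*} [SeminormedAddCommGroup E]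
    {S T : E → E} {y : E} {c : ℝ} (h : ‖T y - S y‖ ≤ c * ‖y - T y‖) :
    ‖y - S y‖ ≤ (1 + c) * ‖y - T y‖ :=
  calc ‖y - S y‖ ≤ ‖y - T y‖ + ‖T y - S y‖ := norm_sub_le_norm_sub_add_norm_sub _ _ _
    _ ≤ (1 + c) * ‖y - T y‖ := by linarith

theorem one_add_abs_one_sub_mul_le {t M d ε : ℝ} (ht : 0 ≤ t) (htM : t ≤ M) (hd : 0 ≤ d)
    (h2 : 2 * d ≤ ε) (hM : M * d ≤ ε) : (1 + |1 - t|) * d ≤ ε := by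
  rcases le_total t 1 with ht1 | ht1
  · rw [abs_of_nonneg (sub_nonneg.2 ht1)]
    nlinarith
  · rw [abs_of_nonpos (sub_nonpos.2 ht1)]
    nlinarith

theorem natCast_mul_le_one_div_of_le_one_div_pred (N k : ℕ) {d : ℝ}
    (h : d ≤ 1 / (((N * (k + 1) - 1 : ℕ) : ℝ) + 1)) : (N : ℝ) * d ≤ 1 / ((k : ℝ) + 1) := by
  rcases N.eq_zero_or_pos with rfl | hN
  · simp only [Nat.cast_zero, zero_mul]
    positivity
  · have hcast : (((N * (k + 1) - 1 : ℕ) : ℝ) + 1) = N * ((k : ℝ) + 1) := by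
      rw [Nat.cast_sub (Nat.one_le_iff_ne_zero.2 (by positivity))]
      push_cast
      ring
    rw [hcast] at h
    calc (N : ℝ) * d ≤ N * (1 / (N * ((k : ℝ) + 1))) := by gcongr
      _ = 1 / ((k : ℝ) + 1) := by field_simp

theorem div_le_mul_of_le_of_one_div_le {a b A L : ℝ} (hb : 0 < b) (hL : 0 < L) (hA : 0 ≤ A)
    (haA : a ≤ A) (hLb : 1 / L ≤ b) : a / b ≤ A * L :=
  calc a / b ≤ A * (1 / b) := by rw [mul_one_div]; gcongr
    _ ≤ A * L := by gcongr; exact (one_div_le hb hL).2 hLb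
theorem genVAM_rate_of_Tm_asymptotic_regularity_general {X : Type*} [NormedAddCommGroup X]
    [NormedSpace ℝ X]
    (C : Set X) (hC : Convex ℝ C)
    (f : X → X)
    (hfC : ∀ x ∈ C, f x ∈ C)
    (T : ℕ → X → X) (hTC : ∀ n, ∀ x ∈ C, T n x ∈ C)
    (a : ℕ → ℝ) (ha : ∀ n, a n ∈ Set.Icc (0 : ℝ) 1)
    (x : ℕ → X) (hx0 : x 0 ∈ C)
    (hx : ∀ n, x (n + 1) = a n • f (x n) + (1 - a n) • T n (x n))
    (lam : ℕ → ℝ) (hlam : ∀ n, 0 < lam n)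
    (Ψ : ℕ → ℕ) (hΨ : ∀ k n : ℕ, Ψ k ≤ n → ‖x n - T n (x n)‖ ≤ 1 / ((k : ℝ) + 1))
    (m : ℕ)
    (hRes : ∀ n : ℕ, ∀ y ∈ C, ‖T n y - T m y‖ ≤ |1 - lam m / lam n| * ‖y - T n y‖)
    (Λ : ℕ) (hΛ : 1 ≤ Λ) (NΛ : ℕ) (hΛlam : ∀ n : ℕ, NΛ ≤ n → 1 / (Λ : ℝ) ≤ lam n)
    (Λm : ℕ) (hΛmlam : lam m ≤ Λm) :
    ∀ k n : ℕ, max (max NΛ (Ψ (Λm * Λ * (k + 1) - 1))) (Ψ (2 * k + 1)) ≤ n →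
      ‖x n - T m (x n)‖ ≤ 1 / ((k : ℝ) + 1) := by
  intro k n hn
  obtain ⟨⟨hNΛ, hΨΛ⟩, hΨ2⟩ := by simpa only [max_le_iff] using hn
  have hxn := hC.mem_of_recursion hfC hTC ha hx0 hx n
  have hratio : lam m / lam n ≤ Λm * Λ :=
    div_le_mul_of_le_of_one_div_le (hlam n) (by exact_mod_cast hΛ) (Nat.cast_nonneg _)
      hΛmlam (hΛlam n hNΛ)
  have hfactor2 : ((2 : ℕ) : ℝ) * ‖x n - T n (x n)‖ ≤ 1 / ((k : ℝ) + 1) :=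
    natCast_mul_le_one_div_of_le_one_div_pred 2 k
      (hΨ _ n (by rwa [show 2 * (k + 1) - 1 = 2 * k + 1 by omega]))
  have hfactorΛ := natCast_mul_le_one_div_of_le_one_div_pred (Λm * Λ) k (hΨ _ n hΨΛ)
  push_cast at hfactor2 hfactorΛ
  exact (norm_sub_le_one_add_mul_of_norm_sub_le (hRes n _ hxn)).trans
    (one_add_abs_one_sub_mul_le (div_pos (hlam m) (hlam n)).le hratio (norm_nonneg _)
      hfactor2 hfactorΛ)

/-- If `Ψ` is a rate of `(T_n)`-asymptotic regularity of the genVAM iteration `(x_n)`,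
`(T_n)` satisfies `Res((λ_n), n, m)` for all `n`, `λ_n ≥ 1/Λ` for `n ≥ N_Λ`, and
`Λ_m ≥ λ_m`, then `Ψ_m(k) = max {N_Λ, Ψ(Λ_m Λ (k+1) - 1), Ψ(2k+1)}` is a rate of
`T_m`-asymptotic regularity of `(x_n)`. -/
theorem genVAM_rate_of_Tm_asymptotic_regularity {X : Type*} [NormedAddCommGroup X]
    [NormedSpace ℝ X]
    (C : Set X) (hCne : C.Nonempty) (hC : Convex ℝ C)
    (f : X → X) (α : ℝ) (hα0 : 0 ≤ α) (hα1 : α < 1)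
    (hfC : ∀ x ∈ C, f x ∈ C)
    (hf : ∀ x ∈ C, ∀ y ∈ C, ‖f x - f y‖ ≤ α * ‖x - y‖)
    (T : ℕ → X → X) (hTC : ∀ n, ∀ x ∈ C, T n x ∈ C)
    (hT : ∀ n, ∀ x ∈ C, ∀ y ∈ C, ‖T n x - T n y‖ ≤ ‖x - y‖)
    (z : X) (hz : z ∈ C) (hzfix : ∀ n, T n z = z)
    (a : ℕ → ℝ) (ha : ∀ n, a n ∈ Set.Icc (0 : ℝ) 1)
    (x : ℕ → X) (hx0 : x 0 ∈ C)
    (hx : ∀ n, x (n + 1) = a n • f (x n) + (1 - a n) • T n (x n))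
    (lam : ℕ → ℝ) (hlam : ∀ n, 0 < lam n)
    (Ψ : ℕ → ℕ) (hΨ : ∀ k n : ℕ, Ψ k ≤ n → ‖x n - T n (x n)‖ ≤ 1 / ((k : ℝ) + 1))
    (m : ℕ)
    (hRes : ∀ n : ℕ, ∀ y ∈ C, ‖T n y - T m y‖ ≤ |1 - lam m / lam n| * ‖y - T n y‖)
    (Λ : ℕ) (hΛ : 1 ≤ Λ) (NΛ : ℕ) (hΛlam : ∀ n : ℕ, NΛ ≤ n → 1 / (Λ : ℝ) ≤ lam n)
    (Λm : ℕ) (hΛm : 1 ≤ Λm) (hΛmlam : lam m ≤ Λm) :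
    ∀ k n : ℕ, max (max NΛ (Ψ (Λm * Λ * (k + 1) - 1))) (Ψ (2 * k + 1)) ≤ n →
      ‖x n - T m (x n)‖ ≤ 1 / ((k : ℝ) + 1) :=
  genVAM_rate_of_Tm_asymptotic_regularity_general C hC f hfC T hTC a ha x hx0 hx lam hlam Ψ hΨ m
    hRes Λ hΛ NΛ hΛlam Λm hΛmlam
end
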